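/- arXiv:1607.03035 — 2 statements merged into one kernel-verified Lean document; each statement's English description precedes it below -/
import Mathlib

section
/- Let p > 1 and q > 1 with 1/p + 1/q = 1, and let (ξ_n)_{n≥1} be a sequence of real random variables with τ_{φ_p}(ξ_n) < ∞ for each n. Suppose there exist positive constants c and α such that for every natural number n, τ_{φ_p}(∑_{i=1}^n ξ_i) ≤ c·n^{1−α}. Then for every ε > 0 and every natural number n with n > (c/ε)^{1/α}, P(|∑_{i=1}^n ξ_i| ≥ nε) ≤ 2 exp(1/q − 1/2) · exp(−n^{qα} (1/q) (ε/c)^q). -/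
open MeasureTheory Real Filter

/-- The quadratic `N`-function `φ_p`: `φ_p(x) = x²/2` for `|x| ≤ 1` and
`φ_p(x) = (1/p)|x|^p - 1/p + 1/2` for `|x| > 1`. -/
noncomputable def phi (p : ℝ) (x : ℝ) : ℝ :=
  if |x| ≤ 1 then x ^ 2 / 2 else (1 / p) * |x| ^ p - 1 / p + 1 / 2

/-- The set of admissible constants in the definition of the `φ`-subgaussian standard:
`{a ≥ 0 : ∀ λ, ln E exp(λξ) ≤ φ(aλ)}` (the exponentiated form of the inequality also
encodes finiteness of `E exp(λξ)`). -/
def subSet {Ω : Type*} [MeasurableSpace Ω] (μ : Measure Ω) (φ : ℝ → ℝ) (ξ : Ω → ℝ) :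
    Set ℝ :=
  {a | 0 ≤ a ∧ ∀ l : ℝ,
    ∫⁻ ω, ENNReal.ofReal (Real.exp (l * ξ ω)) ∂μ ≤ ENNReal.ofReal (Real.exp (φ (a * l)))}

/-- The `φ`-subgaussian standard (norm) `τ_φ(ξ)`. -/
noncomputable def tau {Ω : Type*} [MeasurableSpace Ω] (μ : Measure Ω) (φ : ℝ → ℝ)
    (ξ : Ω → ℝ) : ℝ :=
  sInf (subSet μ φ ξ)

/-! Since `φ_p` is continuous and depends only on `|x|`, the admissible constants of a variable
form a closed up-set, so `E exp(λ S_n) ≤ exp φ_p(a λ)` holds at `a = c n^(1-α)` itself. Chernoff's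
bound on both tails at level `t = n ε` gives `2 exp(φ_p(a λ) - λ t)`; with `m = t / a > 1` and
`λ = m^(q-1) / a` the exponent is `φ_p(m^(q-1)) - m^q`, which is `1/q - 1/2 - m^q/q` because
`m^(q-1) > 1` falls in the power branch of `φ_p` and Young's inequality is an equality there. -/

theorem phi_neg (p x : ℝ) : phi p (-x) = phi p x := by
  simp only [phi, abs_neg, neg_sq]

theorem phi_le_phi_of_abs_le {p x y : ℝ} (hp : 0 ≤ p) (h : |x| ≤ |y|) : phi p x ≤ phi p y := by
  have hp' : 0 ≤ 1 / p := by positivity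
  unfold phi
  split_ifs with hx hy hy
  · nlinarith [sq_abs x, sq_abs y, abs_nonneg x]
  · have : 1 ≤ |y| ^ p := Real.one_le_rpow (by linarith) hp
    nlinarith [sq_abs x, abs_nonneg x]
  · linarith
  · have : |x| ^ p ≤ |y| ^ p := Real.rpow_le_rpow (abs_nonneg x) h hp
    nlinarith

theorem continuous_phi {p : ℝ} (hp : 0 ≤ p) : Continuous (phi p) := by
  refine Continuous.if_le (by fun_prop) ?_ continuous_abs continuous_const fun x hx => ?_
  · exact (continuous_const.mul (continuous_abs.rpow_const fun _ => Or.inr hp)).sub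
      continuous_const |>.add continuous_const
  · rw [hx, Real.one_rpow, ← sq_abs, hx]
    ring

theorem phi_rpow_sub_one_sub_mul {p q m : ℝ} (hqp : q.HolderConjugate p) (hm : 1 < m) :
    phi p (m ^ (q - 1)) - m ^ (q - 1) * m = 1 / q - 1 / 2 - m ^ q / q := by
  have hm0 : 0 < m := by linarith
  have hlarge : 1 < m ^ (q - 1) := Real.one_lt_rpow hm hqp.sub_one_pos
  rw [phi, if_neg (by rw [abs_of_pos (by linarith)]; linarith), abs_of_pos (by linarith),
    ← Real.rpow_mul hm0.le, hqp.sub_one_mul_conj, ← Real.rpow_add_one hm0.ne', sub_add_cancel,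
    one_div p, ← hqp.one_sub_inv]
  ring

section Subgaussian

variable {Ω : Type*} [MeasurableSpace Ω] {μ : Measure Ω} {φ : ℝ → ℝ} {ξ : Ω → ℝ}

theorem isClosed_subSet (hφ : Continuous φ) : IsClosed (subSet μ φ ξ) := by
  simp only [subSet, Set.ofPred_and, Set.ofPred_forall]
  exact isClosed_Ici.inter <| isClosed_iInter fun l => isClosed_le continuous_const <|
    ENNReal.continuous_ofReal.comp <| by fun_prop

theorem mem_subSet_of_le (hφ : ∀ x y, |x| ≤ |y| → φ x ≤ φ y) {a b : ℝ}
    (ha : a ∈ subSet μ φ ξ) (hab : a ≤ b) : b ∈ subSet μ φ ξ := by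
  refine ⟨ha.1.trans hab, fun l => (ha.2 l).trans ?_⟩
  gcongr
  apply hφ
  rw [abs_mul, abs_mul, abs_of_nonneg ha.1, abs_of_nonneg (ha.1.trans hab)]
  gcongr

theorem mem_subSet_of_tau_le (hφc : Continuous φ) (hφ : ∀ x y, |x| ≤ |y| → φ x ≤ φ y)
    (hne : (subSet μ φ ξ).Nonempty) {a : ℝ} (ha : tau μ φ ξ ≤ a) : a ∈ subSet μ φ ξ :=
  mem_subSet_of_le hφ ((isClosed_subSet hφc).csInf_mem hne ⟨0, fun _ h => h.1⟩) ha

theorem measure_ge_le_exp_of_lintegral_exp_le (hξ : Measurable ξ) {l B : ℝ} (hl : 0 < l)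
    (h : ∫⁻ ω, ENNReal.ofReal (Real.exp (l * ξ ω)) ∂μ ≤ ENNReal.ofReal (Real.exp B)) (t : ℝ) :
    μ {ω | t ≤ ξ ω} ≤ ENNReal.ofReal (Real.exp (B - l * t)) := by
  have hpos : ENNReal.ofReal (Real.exp (l * t)) ≠ 0 := by simp [Real.exp_pos]
  calc μ {ω | t ≤ ξ ω}
      ≤ μ {ω | ENNReal.ofReal (Real.exp (l * t)) ≤ ENNReal.ofReal (Real.exp (l * ξ ω))} :=
        measure_mono fun ω (hω : t ≤ ξ ω) =>
          ENNReal.ofReal_le_ofReal (Real.exp_le_exp.2 (by gcongr))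
    _ ≤ (∫⁻ ω, ENNReal.ofReal (Real.exp (l * ξ ω)) ∂μ) / ENNReal.ofReal (Real.exp (l * t)) :=
        meas_ge_le_lintegral_div (by fun_prop) hpos ENNReal.ofReal_ne_top
    _ ≤ ENNReal.ofReal (Real.exp B) / ENNReal.ofReal (Real.exp (l * t)) := by gcongr
    _ = ENNReal.ofReal (Real.exp (B - l * t)) := by
        rw [← ENNReal.ofReal_div_of_pos (Real.exp_pos _), ← Real.exp_sub]

theorem measure_abs_ge_le_of_mem_subSet (hφ : ∀ x, φ (-x) = φ x) (hξ : Measurable ξ) {a l : ℝ}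
    (ha : a ∈ subSet μ φ ξ) (hl : 0 < l) (t : ℝ) :
    μ {ω | t ≤ |ξ ω|} ≤ ENNReal.ofReal (2 * Real.exp (φ (a * l) - l * t)) := by
  have hupper := measure_ge_le_exp_of_lintegral_exp_le hξ hl (ha.2 l) t
  have hlower := measure_ge_le_exp_of_lintegral_exp_le hξ.neg hl (ξ := fun ω => -ξ ω)
    (by simpa only [mul_neg, neg_mul, hφ] using ha.2 (-l)) t
  calc μ {ω | t ≤ |ξ ω|}
      ≤ μ ({ω | t ≤ ξ ω} ∪ {ω | t ≤ -ξ ω}) := measure_mono fun ω (hω : t ≤ |ξ ω|) => le_abs.1 hω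
    _ ≤ μ {ω | t ≤ ξ ω} + μ {ω | t ≤ -ξ ω} := measure_union_le _ _
    _ ≤ _ := add_le_add hupper hlower
    _ = _ := by rw [two_mul, ENNReal.ofReal_add (by positivity) (by positivity)]

theorem measure_abs_ge_le_of_mem_subSet_phi {p q : ℝ} (hqp : q.HolderConjugate p)
    (hξ : Measurable ξ) {a t : ℝ} (ha : a ∈ subSet μ (phi p) ξ) (ha0 : 0 < a) (hat : a < t) :
    μ {ω | t ≤ |ξ ω|} ≤
      ENNReal.ofReal (2 * Real.exp (1 / q - 1 / 2 - (t / a) ^ q / q)) := by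
  have hm : 1 < t / a := (one_lt_div ha0).2 hat
  have hl : 0 < (t / a) ^ (q - 1) / a := by positivity
  convert measure_abs_ge_le_of_mem_subSet (phi_neg p) hξ ha hl t using 4
  rw [mul_div_cancel₀ _ ha0.ne', div_mul_eq_mul_div, mul_div_assoc,
    phi_rpow_sub_one_sub_mul hqp hm]

end Subgaussian

theorem tail_bound_partial_sums_general
    {Ω : Type*} [MeasurableSpace Ω] (μ : Measure Ω)
    (p q : ℝ) (hq : 1 < q) (hpq : 1 / p + 1 / q = 1)
    (ξ : ℕ → Ω → ℝ) (hmeas : ∀ n, Measurable (ξ n))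
    (hsubsum : ∀ n : ℕ, 1 ≤ n → (subSet μ (phi p) (fun ω => ∑ i ∈ Finset.Icc 1 n, ξ i ω)).Nonempty)
    (c α : ℝ) (hc : 0 < c) (hα : 0 < α)
    (hτ : ∀ n : ℕ, 1 ≤ n →
      tau μ (phi p) (fun ω => ∑ i ∈ Finset.Icc 1 n, ξ i ω) ≤ c * (n : ℝ) ^ ((1 : ℝ) - α))
    (ε : ℝ) (hε : 0 < ε) (n : ℕ) (hn : (c / ε) ^ (1 / α) < (n : ℝ)) :
    μ {ω | (n : ℝ) * ε ≤ |∑ i ∈ Finset.Icc 1 n, ξ i ω|} ≤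
      ENNReal.ofReal (2 * Real.exp (1 / q - 1 / 2) *
        Real.exp (-((n : ℝ) ^ (q * α) * (1 / q) * (ε / c) ^ q))) := by
  have hqp : q.HolderConjugate p :=
    Real.holderConjugate_iff.2 ⟨hq, by simpa only [one_div, add_comm] using hpq⟩
  have hn0 : (0 : ℝ) < n := lt_of_le_of_lt (by positivity) hn
  have hn1 : 1 ≤ n := Nat.cast_pos.1 hn0
  have hna : c / ε < (n : ℝ) ^ α :=
    (Real.rpow_inv_lt_iff_of_pos (by positivity) hn0.le hα).1 (by simpa only [one_div] using hn)
  have hratio : n * ε / (c * (n : ℝ) ^ (1 - α)) = ε / c * (n : ℝ) ^ α := by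
    rw [Real.rpow_sub hn0, Real.rpow_one]
    field_simp
  have hlt : c * (n : ℝ) ^ (1 - α) < n * ε := by
    rw [← one_lt_div (by positivity), hratio, div_mul_eq_mul_div, one_lt_div hc]
    linarith [(div_lt_iff₀ hε).1 hna]
  have hp : 0 ≤ p := hqp.symm.nonneg
  have ha := mem_subSet_of_tau_le (continuous_phi hp) (fun _ _ => phi_le_phi_of_abs_le hp)
    (hsubsum n hn1) (hτ n hn1)
  have htail := measure_abs_ge_le_of_mem_subSet_phi hqp
    (Finset.measurable_sum _ fun i _ => hmeas i) ha (by positivity) hlt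
  rw [hratio, Real.mul_rpow (by positivity) (by positivity), ← Real.rpow_mul hn0.le] at htail
  convert htail using 2
  rw [mul_assoc, ← Real.exp_add, mul_comm q α]
  congr 2
  ring

/-- Quantitative tail bound in the main theorem: under the assumption
`τ_{φ_p}(∑_{i=1}^n ξ_i) ≤ c·n^{1−α}`, for every `ε > 0` and every `n > (c/ε)^{1/α}`,
`P(|∑_{i=1}^n ξ_i| ≥ nε) ≤ 2 exp(1/q − 1/2) exp(−n^{qα}(1/q)(ε/c)^q)`. -/
theorem tail_bound_partial_sums
    {Ω : Type*} [MeasurableSpace Ω] (μ : Measure Ω) [IsProbabilityMeasure μ]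
    (p q : ℝ) (hp : 1 < p) (hq : 1 < q) (hpq : 1 / p + 1 / q = 1)
    (ξ : ℕ → Ω → ℝ) (hmeas : ∀ n, Measurable (ξ n))
    (hsub : ∀ n, (subSet μ (phi p) (ξ n)).Nonempty)
    (hsubsum : ∀ n : ℕ, 1 ≤ n → (subSet μ (phi p) (fun ω => ∑ i ∈ Finset.Icc 1 n, ξ i ω)).Nonempty)
    (c α : ℝ) (hc : 0 < c) (hα : 0 < α)
    (hτ : ∀ n : ℕ, 1 ≤ n →
      tau μ (phi p) (fun ω => ∑ i ∈ Finset.Icc 1 n, ξ i ω) ≤ c * (n : ℝ) ^ ((1 : ℝ) - α))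
    (ε : ℝ) (hε : 0 < ε) (n : ℕ) (hn1 : 1 ≤ n) (hn : (c / ε) ^ (1 / α) < (n : ℝ)) :
    μ {ω | (n : ℝ) * ε ≤ |∑ i ∈ Finset.Icc 1 n, ξ i ω|} ≤
      ENNReal.ofReal (2 * Real.exp (1 / q - 1 / 2) *
        Real.exp (-((n : ℝ) ^ (q * α) * (1 / q) * (ε / c) ^ q))) :=
  tail_bound_partial_sums_general μ p q hq hpq ξ hmeas hsubsum c α hc hα hτ ε hε n hn
end

section
/- Let p, q > 1 with 1/p + 1/q = 1, let g be a standard Gaussian random variable (g ~ N(0,1)), and set ξ = |g|^{2/q} − E|g|^{2/q}. Then ξ is φ_p-subgaussian, i.e., τ_{φ_p}(ξ) < ∞: there exists a ≥ 0 such that ln E exp(λξ) ≤ φ_p(aλ) for all λ ∈ ℝ. -/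
open MeasureTheory Real ProbabilityTheory
open scoped ENNReal NNReal

/-! Write `U = |g| ^ (2 / q)` and `ξ = U - 𝔼 U`. By Fernique's theorem `exp (c g²)` is integrable
for some `c > 0`, and Young's inequality with weight `c` gives `λ U ≤ C |λ| ^ p + c g²`; hence
`𝔼 exp (λ ξ) ≤ exp (D |λ| ^ p)` for `|λ| ≥ 1`. For `|λ| ≤ 1`, the pointwise bound
`e^t ≤ 1 + t + t² e^|t|` and `𝔼 ξ = 0` give `𝔼 exp (λ ξ) ≤ 1 + K λ² ≤ exp (K λ²)`. Both bounds are
below `φ_p (a λ)` for large `a`; in the intermediate range `1/a < |λ| ≤ 1` one uses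
`φ_p x ≥ |x| - 1/2` for `|x| > 1`, which is Bernoulli's inequality. -/

lemma exp_le_one_add_add_sq_mul_exp_abs (t : ℝ) : exp t ≤ 1 + t + t ^ 2 * exp |t| := by
  have h₁ := add_one_le_exp t
  have h₂ := add_one_le_exp (-t)
  have h₃ : exp t * exp (-t) = 1 := by rw [← exp_add, add_neg_cancel, exp_zero]
  have h₄ : exp t - 1 - t ≤ t * (exp t - 1) := by nlinarith [exp_pos t]
  rcases le_total 0 t with ht | ht
  · rw [abs_of_nonneg ht]
    nlinarith [exp_pos t]
  · rw [abs_of_nonpos ht]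
    nlinarith

lemma phi_of_abs_le_one {p x : ℝ} (hx : |x| ≤ 1) : phi p x = x ^ 2 / 2 := if_pos hx

lemma phi_of_one_lt_abs {p x : ℝ} (hx : 1 < |x|) : phi p x = 1 / p * |x| ^ p - 1 / p + 1 / 2 :=
  if_neg hx.not_ge

lemma abs_sub_half_le_phi {p x : ℝ} (hp : 1 ≤ p) (hx : 1 < |x|) : |x| - 1 / 2 ≤ phi p x := by
  have hbernoulli := one_add_mul_self_le_rpow_one_add (s := |x| - 1) (by linarith) hp
  rw [add_sub_cancel] at hbernoulli
  rw [phi_of_one_lt_abs hx, ← sub_nonneg]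
  have : 1 / p * |x| ^ p - 1 / p + 1 / 2 - (|x| - 1 / 2) = (|x| ^ p - (1 + p * (|x| - 1))) / p := by
    field_simp
    ring
  rw [this]
  exact div_nonneg (by linarith) (by linarith)

lemma exists_forall_le_phi_mul {p K D : ℝ} {ψ : ℝ → ℝ} (hp : 1 ≤ p) (hK : 0 ≤ K) (hD : 0 ≤ D)
    (h_small : ∀ l, |l| ≤ 1 → ψ l ≤ K * l ^ 2) (h_large : ∀ l, 1 ≤ |l| → ψ l ≤ D * |l| ^ p) :
    ∃ a, 0 ≤ a ∧ ∀ l, ψ l ≤ phi p (a * l) := by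
  -- `a ≥ 2K` covers `|l| ≤ 1`, and `a ^ p ≥ a ≥ pD + 1` covers `|l| ≥ 1`.
  set a := 2 * K + p * D + 2
  have ha : 1 < a := by nlinarith [mul_nonneg (zero_le_one.trans hp) hD]
  have hKa : 2 * K ≤ a := by nlinarith [mul_nonneg (zero_le_one.trans hp) hD]
  refine ⟨a, by linarith, fun l ↦ ?_⟩
  have hal : |a * l| = a * |l| := by rw [abs_mul, abs_of_pos (by linarith)]
  rcases le_or_gt |l| 1 with hl | hl
  · refine (h_small l hl).trans ?_
    rcases le_or_gt |a * l| 1 with hal1 | hal1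
    · rw [phi_of_abs_le_one hal1]
      have : a ≤ a ^ 2 := by nlinarith
      nlinarith [sq_nonneg l]
    · refine le_trans ?_ (abs_sub_half_le_phi hp hal1)
      have hl2 : l ^ 2 ≤ |l| := by nlinarith [sq_abs l, abs_nonneg l]
      nlinarith [abs_nonneg l]
  · have hal1 : 1 < |a * l| := by rw [hal]; nlinarith
    have hp0 : 0 < p := by linarith
    have hlp : 1 ≤ |l| ^ p := one_le_rpow hl.le hp0.le
    have hap : p * D + 1 ≤ a ^ p := by linarith [self_le_rpow_of_one_le ha.le hp]
    refine (h_large l hl.le).trans ?_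
    rw [phi_of_one_lt_abs hal1, hal, mul_rpow (by linarith) (abs_nonneg l)]
    have : D * |l| ^ p + (|l| ^ p - 1) / p ≤ 1 / p * (a ^ p * |l| ^ p) - 1 / p := by
      field_simp
      nlinarith
    linarith [div_nonneg (sub_nonneg.2 hlp) hp0.le]

lemma exists_mul_le_mul_rpow_add_mul_rpow {p q ε : ℝ} (hpq : p.HolderConjugate q) (hε : 0 < ε) :
    ∃ C, 0 ≤ C ∧ ∀ a b : ℝ, 0 ≤ b → a * b ≤ C * |a| ^ p + ε * b ^ q := by
  set s := (ε * q) ^ (1 / q)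
  have hq := hpq.symm.pos
  have hs : 0 < s := by positivity
  have hsq : s ^ q = ε * q := by
    rw [← rpow_mul (by positivity), one_div_mul_cancel hq.ne', rpow_one]
  refine ⟨(1 / s) ^ p / p, div_nonneg (by positivity) hpq.pos.le, fun a b hb ↦ ?_⟩
  calc a * b ≤ (|a| / s) * (s * b) := by
        rw [show |a| / s * (s * b) = |a| * b by field_simp]
        exact mul_le_mul_of_nonneg_right (le_abs_self a) hb
    _ ≤ (|a| / s) ^ p / p + (s * b) ^ q / q :=
        young_inequality_of_nonneg (by positivity) (by positivity) hpq
    _ = (1 / s) ^ p / p * |a| ^ p + ε * b ^ q := by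
        rw [div_eq_mul_one_div |a|, mul_rpow (abs_nonneg a) (by positivity),
          mul_rpow hs.le hb, hsq]
        field_simp

section Mgf

variable {Ω : Type*} [MeasurableSpace Ω] {μ : Measure Ω} {X : Ω → ℝ}

lemma integrable_of_forall_integrable_exp_mul
    (h_int : ∀ t, Integrable (fun ω ↦ exp (t * X ω)) μ) : Integrable X μ := by
  simpa using
    integrable_pow_of_integrable_exp_mul one_ne_zero (h_int 1) (by simpa using h_int (-1)) 1

lemma integrable_sq_mul_exp_abs_of_forall_integrable_exp_mul
    (h_int : ∀ t, Integrable (fun ω ↦ exp (t * X ω)) μ) :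
    Integrable (fun ω ↦ X ω ^ 2 * exp |X ω|) μ := by
  simpa using integrable_pow_abs_mul_exp_add_of_integrable_exp_mul (v := 0) (t := 2)
    (by simpa using h_int 2) (by simpa using h_int (-2)) zero_le_one (by norm_num) 2

lemma mgf_le_one_add_mul_sq [IsProbabilityMeasure μ]
    (h_int : ∀ t, Integrable (fun ω ↦ exp (t * X ω)) μ) (h_mean : μ[X] = 0) {l : ℝ}
    (hl : |l| ≤ 1) : mgf X μ l ≤ 1 + μ[fun ω ↦ X ω ^ 2 * exp |X ω|] * l ^ 2 := by
  have hX := integrable_of_forall_integrable_exp_mul h_int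
  have hX2 := integrable_sq_mul_exp_abs_of_forall_integrable_exp_mul h_int
  have h_pointwise (ω : Ω) : exp (l * X ω) ≤ 1 + l * X ω + l ^ 2 * (X ω ^ 2 * exp |X ω|) := by
    have h_abs : |l * X ω| ≤ |X ω| := by
      rw [abs_mul]; exact mul_le_of_le_one_left (abs_nonneg _) hl
    calc exp (l * X ω) ≤ 1 + l * X ω + (l * X ω) ^ 2 * exp |l * X ω| :=
          exp_le_one_add_add_sq_mul_exp_abs _
      _ ≤ 1 + l * X ω + l ^ 2 * (X ω ^ 2 * exp |X ω|) := by
          rw [mul_pow, mul_assoc]; gcongr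
  have h_affine : Integrable (fun ω ↦ 1 + l * X ω) μ := (integrable_const 1).add (hX.const_mul l)
  calc mgf X μ l ≤ ∫ ω, 1 + l * X ω + l ^ 2 * (X ω ^ 2 * exp |X ω|) ∂μ :=
        integral_mono (h_int l) (h_affine.add (hX2.const_mul _)) h_pointwise
    _ = 1 + μ[fun ω ↦ X ω ^ 2 * exp |X ω|] * l ^ 2 := by
        rw [integral_add h_affine (hX2.const_mul _),
          integral_add (integrable_const 1) (hX.const_mul l), integral_const_mul,
          integral_const_mul, h_mean]
        simp [mul_comm]

theorem exists_cgf_le_phi [IsProbabilityMeasure μ] {p D : ℝ} (hp : 1 ≤ p) (hD : 0 ≤ D)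
    (h_int : ∀ t, Integrable (fun ω ↦ exp (t * X ω)) μ) (h_mean : μ[X] = 0)
    (h_large : ∀ l, 1 ≤ |l| → mgf X μ l ≤ exp (D * |l| ^ p)) :
    ∃ a, 0 ≤ a ∧ ∀ l, cgf X μ l ≤ phi p (a * l) := by
  refine exists_forall_le_phi_mul (K := μ[fun ω ↦ X ω ^ 2 * exp |X ω|]) hp
    (integral_nonneg fun ω ↦ by positivity) hD (fun l hl ↦ ?_) (fun l hl ↦ ?_)
  · rw [cgf, log_le_iff_le_exp (mgf_pos (h_int l))]
    exact (mgf_le_one_add_mul_sq h_int h_mean hl).trans (by rw [add_comm]; exact add_one_le_exp _)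
  · rw [cgf, log_le_iff_le_exp (mgf_pos (h_int l))]
    exact h_large l hl

end Mgf

lemma exists_exp_mul_abs_rpow_sub_le {p q c : ℝ} (hpq : p.HolderConjugate q) (hc : 0 < c)
    (m : ℝ) : ∃ C, 0 ≤ C ∧ ∀ l x : ℝ,
      exp (l * (|x| ^ (2 / q) - m)) ≤ exp (C * |l| ^ p + |m| * |l|) * exp (c * x ^ 2) := by
  obtain ⟨C, hC, hyoung⟩ := exists_mul_le_mul_rpow_add_mul_rpow hpq hc
  refine ⟨C, hC, fun l x ↦ ?_⟩
  have hpow : (|x| ^ (2 / q)) ^ q = x ^ 2 := by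
    rw [← rpow_mul (abs_nonneg x), div_mul_cancel₀ _ hpq.symm.pos.ne', rpow_two, sq_abs]
  have h₁ := hyoung l (|x| ^ (2 / q)) (by positivity)
  have h₂ : -(l * m) ≤ |m| * |l| := by rw [mul_comm, ← abs_mul]; exact neg_le_abs _
  rw [hpow] at h₁
  rw [← exp_add, exp_le_exp]
  linarith

section AbsRpow

variable {μ : Measure ℝ} {p q c : ℝ}

lemma integrable_exp_mul_abs_rpow_sub (hpq : p.HolderConjugate q) (hc : 0 < c)
    (hμ : Integrable (fun x ↦ exp (c * x ^ 2)) μ) (m l : ℝ) :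
    Integrable (fun x ↦ exp (l * (|x| ^ (2 / q) - m))) μ := by
  obtain ⟨C, -, hbound⟩ := exists_exp_mul_abs_rpow_sub_le hpq hc m
  have h_meas : Measurable fun x : ℝ ↦ exp (l * (|x| ^ (2 / q) - m)) := by fun_prop
  refine (hμ.const_mul (exp (C * |l| ^ p + |m| * |l|))).mono' h_meas.aestronglyMeasurable
    (ae_of_all _ fun x ↦ ?_)
  rw [norm_of_nonneg (exp_pos _).le]
  exact hbound l x

lemma exists_mgf_abs_rpow_sub_le (hpq : p.HolderConjugate q) (hc : 0 < c)
    (hμ : Integrable (fun x ↦ exp (c * x ^ 2)) μ) (m : ℝ) :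
    ∃ D, 0 ≤ D ∧ ∀ l, 1 ≤ |l| → mgf (fun x ↦ |x| ^ (2 / q) - m) μ l ≤ exp (D * |l| ^ p) := by
  obtain ⟨C, hC, hbound⟩ := exists_exp_mul_abs_rpow_sub_le hpq hc m
  set E := ∫ x, exp (c * x ^ 2) ∂μ
  have hE : 0 ≤ E := integral_nonneg fun x ↦ (exp_pos _).le
  refine ⟨C + |m| + E, by positivity, fun l hl ↦ ?_⟩
  have hl_le : |l| ≤ |l| ^ p := self_le_rpow_of_one_le hl hpq.lt.le
  have hl_one : 1 ≤ |l| ^ p := one_le_rpow hl hpq.pos.le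
  calc mgf (fun x ↦ |x| ^ (2 / q) - m) μ l
      ≤ ∫ x, exp (C * |l| ^ p + |m| * |l|) * exp (c * x ^ 2) ∂μ :=
        integral_mono (integrable_exp_mul_abs_rpow_sub hpq hc hμ m l) (hμ.const_mul _)
          (hbound l)
    _ = exp (C * |l| ^ p + |m| * |l|) * E := integral_const_mul _ _
    _ ≤ exp (C * |l| ^ p + |m| * |l|) * exp E := by
        gcongr; linarith [add_one_le_exp E]
    _ ≤ exp ((C + |m| + E) * |l| ^ p) := by
        rw [← exp_add, exp_le_exp]
        nlinarith [abs_nonneg m]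

theorem exists_cgf_abs_rpow_centered_le_phi [IsProbabilityMeasure μ]
    (hpq : p.HolderConjugate q) (hc : 0 < c) (hμ : Integrable (fun x ↦ exp (c * x ^ 2)) μ) :
    ∃ a, 0 ≤ a ∧ ∀ l,
      cgf (fun x ↦ |x| ^ (2 / q) - ∫ y, |y| ^ (2 / q) ∂μ) μ l ≤ phi p (a * l) := by
  set m := ∫ y, |y| ^ (2 / q) ∂μ
  have h_int := integrable_exp_mul_abs_rpow_sub hpq hc hμ m
  have h_mean : ∫ x, |x| ^ (2 / q) - m ∂μ = 0 := by
    have hU : Integrable (fun x ↦ |x| ^ (2 / q)) μ :=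
      ((integrable_of_forall_integrable_exp_mul h_int).add (integrable_const m)).congr
        (ae_of_all _ fun x ↦ sub_add_cancel _ m)
    rw [integral_sub hU (integrable_const m)]
    simp [m]
  obtain ⟨D, hD, h_large⟩ := exists_mgf_abs_rpow_sub_le hpq hc hμ m
  exact exists_cgf_le_phi hpq.lt.le hD h_int h_mean h_large

end AbsRpow

theorem abs_gaussian_rpow_centered_is_phi_subgaussian_general
    (p q : ℝ) (hp : 1 < p) (hpq : 1 / p + 1 / q = 1)
    (ξ : ℝ → ℝ)
    (hξ : ∀ x : ℝ, ξ x = |x| ^ (2 / q) - ∫ y : ℝ, |y| ^ (2 / q) ∂(gaussianReal 0 1)) :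
    ∃ a : ℝ, 0 ≤ a ∧ ∀ l : ℝ,
      ∫⁻ x, ENNReal.ofReal (Real.exp (l * ξ x)) ∂(gaussianReal 0 1) ≤
        ENNReal.ofReal (Real.exp (phi p (a * l))) := by
  obtain rfl : ξ = fun x ↦ |x| ^ (2 / q) - ∫ y, |y| ^ (2 / q) ∂gaussianReal 0 1 := funext hξ
  have hpq' : p.HolderConjugate q := holderConjugate_iff.2 ⟨hp, by simpa only [one_div] using hpq⟩
  obtain ⟨c, hc, hμ⟩ := IsGaussian.exists_integrable_exp_sq (gaussianReal 0 1)
  simp only [norm_eq_abs, sq_abs] at hμ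
  obtain ⟨a, ha, h_cgf⟩ := exists_cgf_abs_rpow_centered_le_phi hpq' hc hμ
  refine ⟨a, ha, fun l ↦ ?_⟩
  have h_int := integrable_exp_mul_abs_rpow_sub hpq' hc hμ (∫ y, |y| ^ (2 / q) ∂gaussianReal 0 1) l
  rw [← ofReal_integral_eq_lintegral_ofReal h_int (ae_of_all _ fun _ ↦ (exp_pos _).le)]
  exact ENNReal.ofReal_le_ofReal ((exp_cgf h_int).symm.le.trans (exp_le_exp.2 (h_cgf l)))

/-- If `g ∼ N(0,1)` and `1/p + 1/q = 1` with `p, q > 1`, then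
`ξ = |g|^{2/q} − E|g|^{2/q}` is `φ_p`-subgaussian: there is `a ≥ 0` such that
`ln E exp(λξ) ≤ φ_p(aλ)` for all `λ` (stated in exponentiated form, which also
encodes finiteness of `E exp(λξ)`). -/
theorem abs_gaussian_rpow_centered_is_phi_subgaussian
    (p q : ℝ) (hp : 1 < p) (hq : 1 < q) (hpq : 1 / p + 1 / q = 1)
    (ξ : ℝ → ℝ)
    (hξ : ∀ x : ℝ, ξ x = |x| ^ (2 / q) - ∫ y : ℝ, |y| ^ (2 / q) ∂(gaussianReal 0 1)) :
    ∃ a : ℝ, 0 ≤ a ∧ ∀ l : ℝ,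
      ∫⁻ x, ENNReal.ofReal (Real.exp (l * ξ x)) ∂(gaussianReal 0 1) ≤
        ENNReal.ofReal (Real.exp (phi p (a * l))) :=
  abs_gaussian_rpow_centered_is_phi_subgaussian_general p q hp hpq ξ hξ
end
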